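/- Let (X,T) be a minimal topological dynamical system and let α be an admissible cover of X. Then the symbolic representation (X_α, σ) is a minimal topological dynamical system. -/

import Mathlib

open Filter Topology Function Set

/-- Iterates of a homeomorphism indexed by `ℕ`. -/
def hpowNat {X : Type*} [TopologicalSpace X] (T : X ≃ₜ X) : ℕ → X ≃ₜ X
  | 0 => Homeomorph.refl X
  | n + 1 => (hpowNat T n).trans T

/-- Iterates of a homeomorphism indexed by `ℤ`. -/
def hpowInt {X : Type*} [TopologicalSpace X] (T : X ≃ₜ X) : ℤ → X ≃ₜ X
  | Int.ofNat n => hpowNat T n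
  | Int.negSucc n => (hpowNat T (n + 1)).symm

/-- The `n`-th iterate (`n : ℤ`) of the homeomorphism `T`, as a map. -/
def hpow {X : Type*} [TopologicalSpace X] (T : X ≃ₜ X) (n : ℤ) : X → X :=
  ⇑(hpowInt T n)

/-- The (two-sided) orbit of `x` under the homeomorphism `T`. -/
def zorbit {X : Type*} [TopologicalSpace X] (T : X ≃ₜ X) (x : X) : Set X :=
  Set.range fun n : ℤ => hpow T n x

/-- `(X,T)` is a minimal t.d.s.: every orbit is dense. -/
def IsMinimalTDS {X : Type*} [TopologicalSpace X] (T : X ≃ₜ X) : Prop :=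
  ∀ x : X, Dense (zorbit T x)

def shiftE (E : Type*) : (ℤ → E) ≃ (ℤ → E) where
  toFun f n := f (n + 1)
  invFun f n := f (n - 1)
  left_inv f := by funext n; simp
  right_inv f := by funext n; simp

/-- The shift homeomorphism `σ` on `ℤ → E`: `(σ f) n = f (n + 1)`. -/
def shiftH (E : Type*) [TopologicalSpace E] : (ℤ → E) ≃ₜ (ℤ → E) where
  toEquiv := shiftE E
  continuous_toFun := continuous_pi fun n => continuous_apply (n + 1)
  continuous_invFun := continuous_pi fun n => continuous_apply (n - 1)

/-- A finite family `A` of subsets of `X` is an admissible cover: the sets are closed,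
cover `X`, intersect pairwise only in their boundaries, and the union of their
boundaries has empty interior. -/
def IsAdmissibleCover {X : Type*} [TopologicalSpace X] {ι : Type*} (A : ι → Set X) : Prop :=
  (⋃ i, A i) = Set.univ ∧ (∀ i, IsClosed (A i)) ∧
  (∀ i j, i ≠ j → A i ∩ A j = frontier (A i) ∩ frontier (A j)) ∧
  interior (⋃ i, frontier (A i)) = ∅

/-- The set of orbit points hitting the boundaries of the cover:
`D_α = ⋃_{n ∈ ℤ} Tⁿ (∂α)`. -/
def coverBoundaryOrbit {X : Type*} [TopologicalSpace X] (T : X ≃ₜ X) {k : ℕ}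
    (A : Fin k → Set X) : Set X :=
  ⋃ n : ℤ, hpow T n '' (⋃ i, frontier (A i))

/-- The symbolic representation `X_α` of `(X, α)`: the closure in `{0, …, k-1}^ℤ` of the set
of `α`-names of points of `X \ D_α` (the `α`-name `a` of `x` satisfies `Tⁿ x ∈ A (a n)`
for all `n`). -/
def SymbolicRep {X : Type*} [TopologicalSpace X] (T : X ≃ₜ X) {k : ℕ}
    (A : Fin k → Set X) : Set (ℤ → Fin k) :=
  closure {a : ℤ → Fin k |
    ∃ x : X, x ∉ coverBoundaryOrbit T A ∧ ∀ n : ℤ, hpow T n x ∈ A (a n)}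

/-!
If `c` is the `α`-name of a point `y ∉ D_α`, then on a finite window `s` it is also the
(only) `α`-name of every point of the open set `V = ⋂_{j ∈ s} T⁻ʲ (int A_{c j})`, which contains
`y`: the interior of one cover element meets no other element. By minimality and compactness,
a finite set `F` of times brings every point into `V`. Hence if `a'` is the name of a point `x`
that agrees with a given `a ∈ X_α` on `s + F`, and `Tᵖ x ∈ V` with `p ∈ F`, then `σᵖ a` agrees
with `c` on `s`. Shift invariance of `X_α` is inherited from the set of names.
-/

theorem mem_closure_pi_discrete_iff {ι E : Type*} [TopologicalSpace E] [DiscreteTopology E]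
    {S : Set (ι → E)} {b : ι → E} :
    b ∈ closure S ↔ ∀ s : Finset ι, ∃ f ∈ S, ∀ i ∈ s, f i = b i := by
  have hb := Filter.hasBasis_pi_pure b
  simp only [← nhds_discrete, ← nhds_pi] at hb
  rw [mem_closure_iff_nhds_basis hb]
  refine ⟨fun h s => h s s.finite_toSet, fun h I hI => ?_⟩
  simpa using h hI.toFinset

section Iterates

variable {X : Type*} [TopologicalSpace X] (T : X ≃ₜ X)

theorem hpowNat_toEquiv (n : ℕ) : (hpowNat T n).toEquiv = (T.toEquiv : Equiv.Perm X) ^ n := by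
  induction n with
  | zero => rfl
  | succ n ih => rw [pow_succ', ← ih]; rfl

theorem hpow_eq_zpow (n : ℤ) : hpow T n = ⇑((T.toEquiv : Equiv.Perm X) ^ n) := by
  cases n with
  | ofNat n => rw [Int.ofNat_eq_natCast, zpow_natCast, ← hpowNat_toEquiv]; rfl
  | negSucc n => rw [zpow_negSucc, ← hpowNat_toEquiv]; rfl

theorem hpow_add (m n : ℤ) (x : X) : hpow T (m + n) x = hpow T m (hpow T n x) := by
  simp only [hpow_eq_zpow, zpow_add, Equiv.Perm.mul_apply]

theorem hpow_neg_hpow (n : ℤ) (x : X) : hpow T (-n) (hpow T n x) = x := by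
  rw [← hpow_add, neg_add_cancel]; rfl

theorem continuous_hpow (n : ℤ) : Continuous (hpow T n) := (hpowInt T n).continuous

end Iterates

theorem IsMinimalTDS.exists_finset_hpow_mem {X : Type*} [TopologicalSpace X] [CompactSpace X]
    {T : X ≃ₜ X} (hT : IsMinimalTDS T) {V : Set X} (hV : IsOpen V) (hne : V.Nonempty) :
    ∃ F : Finset ℤ, ∀ x, ∃ p ∈ F, hpow T p x ∈ V := by
  have hcover : univ ⊆ ⋃ n : ℤ, hpow T n ⁻¹' V := fun x _ => by
    obtain ⟨_, ⟨n, rfl⟩, hn⟩ := (hT x).exists_mem_open hV hne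
    exact mem_iUnion.2 ⟨n, hn⟩
  obtain ⟨F, hF⟩ := isCompact_univ.elim_finite_subcover _
    (fun n => (continuous_hpow T n).isOpen_preimage _ hV) hcover
  exact ⟨F, fun x => by simpa using hF (mem_univ x)⟩

theorem hpow_shiftH_apply {E : Type*} [TopologicalSpace E] (n : ℤ) (a : ℤ → E) (m : ℤ) :
    hpow (shiftH E) n a m = a (m + n) := by
  rw [hpow_eq_zpow]
  induction n using Int.induction_on generalizing m with
  | zero => simp
  | succ i ih =>
    rw [add_comm, zpow_add, zpow_one, Equiv.Perm.mul_apply]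
    exact (ih (m + 1)).trans (by ring_nf)
  | pred i ih =>
    rw [sub_eq_add_neg, add_comm, zpow_add, zpow_neg_one, Equiv.Perm.mul_apply]
    exact (ih (m - 1)).trans (by ring_nf)

theorem eq_of_mem_of_mem_interior {X ι : Type*} [TopologicalSpace X] {A : ι → Set X}
    (hpair : ∀ i j, i ≠ j → A i ∩ A j = frontier (A i) ∩ frontier (A j)) {x : X} {i j : ι}
    (hj : x ∈ A j) (hi : x ∈ interior (A i)) : j = i := by
  by_contra hne
  have hx : x ∈ frontier (A j) ∩ frontier (A i) := hpair j i hne ▸ ⟨hj, interior_subset hi⟩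
  exact hx.2.2 hi

section Names

variable {X : Type*} [TopologicalSpace X] (T : X ≃ₜ X) {k : ℕ} (A : Fin k → Set X)

/-- `a` is an `α`-name of `x`; for `x ∈ D_α` there may be several. -/
def IsCoverName (x : X) (a : ℤ → Fin k) : Prop :=
  ∀ n : ℤ, hpow T n x ∈ A (a n)

def coverNames : Set (ℤ → Fin k) :=
  {a | ∃ x, x ∉ coverBoundaryOrbit T A ∧ IsCoverName T A x a}

theorem symbolicRep_eq_closure_coverNames : SymbolicRep T A = closure (coverNames T A) := rfl

variable {T A}

theorem IsCoverName.hpow_shiftH {x : X} {a : ℤ → Fin k} (h : IsCoverName T A x a) (p : ℤ) :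
    IsCoverName T A (hpow T p x) (hpow (shiftH (Fin k)) p a) := fun n => by
  rw [hpow_shiftH_apply, ← hpow_add]
  exact h (n + p)

theorem hpow_notMem_coverBoundaryOrbit {x : X} (hx : x ∉ coverBoundaryOrbit T A) (n : ℤ) :
    hpow T n x ∉ coverBoundaryOrbit T A := by
  simp only [coverBoundaryOrbit, mem_iUnion, mem_image, not_exists, not_and] at hx ⊢
  intro m y hy hyx
  exact hx (-n + m) y hy (by rw [hpow_add, hyx, hpow_neg_hpow])

theorem notMem_frontier_of_notMem_coverBoundaryOrbit {x : X}
    (hx : x ∉ coverBoundaryOrbit T A) (i : Fin k) : x ∉ frontier (A i) := fun hxi =>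
  hx (mem_iUnion.2 ⟨0, x, mem_iUnion.2 ⟨i, hxi⟩, rfl⟩)

theorem coverNames_mapsTo_hpow_shiftH (n : ℤ) :
    MapsTo (hpow (shiftH (Fin k)) n) (coverNames T A) (coverNames T A) :=
  fun _ ⟨x, hx, hxa⟩ => ⟨hpow T n x, hpow_notMem_coverBoundaryOrbit hx n, hxa.hpow_shiftH n⟩

theorem exists_isOpen_forall_isCoverName_eq (hclosed : ∀ i, IsClosed (A i))
    (hpair : ∀ i j, i ≠ j → A i ∩ A j = frontier (A i) ∩ frontier (A j)) {c : ℤ → Fin k}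
    (hc : c ∈ coverNames T A) (s : Finset ℤ) :
    ∃ V : Set X, IsOpen V ∧ V.Nonempty ∧
      ∀ x ∈ V, ∀ a, IsCoverName T A x a → ∀ j ∈ s, a j = c j := by
  obtain ⟨y, hy, hyc⟩ := hc
  -- `y` lies in `V`: its orbit avoids the boundaries, so `Tʲ y ∈ A (c j)` lies in the interior.
  refine ⟨⋂ j ∈ s, hpow T j ⁻¹' interior (A (c j)),
    isOpen_biInter_finset fun j _ => (continuous_hpow T j).isOpen_preimage _ isOpen_interior,
    ⟨y, mem_iInter₂.2 fun j _ => ?_⟩, fun x hx a hxa j hj => ?_⟩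
  · have hfr := notMem_frontier_of_notMem_coverBoundaryOrbit
      (hpow_notMem_coverBoundaryOrbit hy j) (c j)
    rw [(hclosed (c j)).frontier_eq] at hfr
    by_contra hint
    exact hfr ⟨hyc j, hint⟩
  · exact eq_of_mem_of_mem_interior hpair (hxa j) (mem_iInter₂.1 hx j hj)

theorem coverNames_subset_closure_zorbit [CompactSpace X] (hT : IsMinimalTDS T)
    (hclosed : ∀ i, IsClosed (A i))
    (hpair : ∀ i j, i ≠ j → A i ∩ A j = frontier (A i) ∩ frontier (A j)) {a : ℤ → Fin k}
    (ha : a ∈ closure (coverNames T A)) :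
    coverNames T A ⊆ closure (zorbit (shiftH (Fin k)) a) := by
  intro c hc
  rw [mem_closure_pi_discrete_iff]
  intro s
  obtain ⟨V, hV, hVne, hVc⟩ := exists_isOpen_forall_isCoverName_eq hclosed hpair hc s
  obtain ⟨F, hF⟩ := hT.exists_finset_hpow_mem hV hVne
  obtain ⟨a', ⟨x, -, hxa'⟩, ha'a⟩ := mem_closure_pi_discrete_iff.1 ha (Finset.image₂ (· + ·) s F)
  obtain ⟨p, hpF, hpV⟩ := hF x
  refine ⟨hpow (shiftH (Fin k)) p a, ⟨p, rfl⟩, fun j hj => ?_⟩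
  rw [← hVc _ hpV _ (hxa'.hpow_shiftH p) j hj, hpow_shiftH_apply, hpow_shiftH_apply,
    ha'a _ (Finset.mem_image₂_of_mem hj hpF)]

end Names

/-- **Lemma A.9.** If `(X,T)` is a minimal t.d.s. and `α` is an admissible cover of `X`,
then the symbolic representation `(X_α, σ)` is a minimal t.d.s.: `X_α` is invariant under
the shift and every orbit in `X_α` is dense in `X_α`. -/
theorem symbolicRep_minimal
    {X : Type*} [MetricSpace X] [CompactSpace X] (T : X ≃ₜ X) (hT : IsMinimalTDS T)
    {k : ℕ} (A : Fin k → Set X) (hA : IsAdmissibleCover A) :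
    (∀ a ∈ SymbolicRep T A, ∀ n : ℤ,
      hpow (shiftH (Fin k)) n a ∈ SymbolicRep T A) ∧
    ∀ a ∈ SymbolicRep T A,
      SymbolicRep T A ⊆ closure (zorbit (shiftH (Fin k)) a) := by
  obtain ⟨-, hclosed, hpair, -⟩ := hA
  simp only [symbolicRep_eq_closure_coverNames]
  refine ⟨fun a ha n => (coverNames_mapsTo_hpow_shiftH n).closure (continuous_hpow _ n) ha,
    fun a ha => ?_⟩
  exact closure_minimal (coverNames_subset_closure_zorbit hT hclosed hpair ha) isClosed_closure
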